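/- arXiv:1512.05302 — 2 statements merged into one kernel-verified Lean document; each statement's English description precedes it below -/
import Mathlib

section
/- Given a binary phylogenetic tree T and two distinct internal vertices v_1 and v_2, and given leaves a, b in distinct components of T − v_1 not containing v_2, and leaves c, d in distinct components of T − v_2 not containing v_1, the quartet ab|cd is displayed by T and distinguishes the path from v_1 to v_2. -/
/-!
Write `x ~ᵥ y` for `Avoids G {v} x y`, a symmetric and transitive relation. A path from `a` to
`v1` meets the `v1`–`v2` path `p` only in `v1` (a later common vertex would give `a ~ᵥ₁ v2`),
so it uses no edge of `p`; likewise for `b`, `c`, `d`. This joins `a` to `b` and `c` to `d`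
off `p`, by walks that are vertex-disjoint: a common vertex `u` of the paths `a → v1` and
`c → v2` would give `c ~ᵥ₂ u ~ᵥ₂ v1`. Finally `a` and `c` cannot be joined off `p`, since then
`v1` and `v2` could, and the bypass of such a walk would be a second `v1`–`v2` path in the tree.
-/

open SimpleGraph

variable {V : Type*}

/-- `x` and `y` are joined by a walk in `G` avoiding the vertex set `S`. -/
def Avoids (G : SimpleGraph V) (S : Set V) (x y : V) : Prop :=
  ∃ w : G.Walk x y, ∀ u ∈ w.support, u ∉ S

/-- `x` and `y` are joined by a walk in `G` avoiding the edge set `F`. -/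
def AvoidsE (G : SimpleGraph V) (F : Set (Sym2 V)) (x y : V) : Prop :=
  ∃ w : G.Walk x y, ∀ e ∈ w.edges, e ∉ F

/-- A leaf of a tree: a vertex with exactly one neighbour (degree one). -/
def IsLeaf (G : SimpleGraph V) (v : V) : Prop := ∃! u, G.Adj v u

/-- An internal vertex of degree three: exactly three distinct neighbours. -/
def IsDeg3 (G : SimpleGraph V) (v : V) : Prop :=
  ∃ a b c, a ≠ b ∧ a ≠ c ∧ b ≠ c ∧ G.Adj v a ∧ G.Adj v b ∧ G.Adj v c ∧
    ∀ u, G.Adj v u → u = a ∨ u = b ∨ u = c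

/-- An unrooted binary phylogenetic tree: a tree all of whose vertices are
leaves (degree 1) or internal vertices of degree 3. -/
def IsBinaryTree (G : SimpleGraph V) : Prop :=
  G.IsTree ∧ ∀ v, IsLeaf G v ∨ IsDeg3 G v

/-- The tree displays the quartet `ab|cd`: there are vertex-disjoint walks
joining `a` to `b` and `c` to `d`. -/
def Displays (G : SimpleGraph V) (a b c d : V) : Prop :=
  ∃ (p : G.Walk a b) (q : G.Walk c d), ∀ u ∈ p.support, u ∉ q.support

/-- The quartet `ab|cd` distinguishes the path `p` between internal vertices
`v1` and `v2`: `{a,b}` and `{c,d}` lie in different connected components of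
the graph obtained by removing the path `p`, the `a`–`b` path passes through
`v1`, and the `c`–`d` path passes through `v2`. -/
def DistPath (G : SimpleGraph V) (a b c d v1 v2 : V) : Prop :=
  ∃ p : G.Walk v1 v2, p.IsPath ∧
    AvoidsE G {e | e ∈ p.edges} a b ∧ AvoidsE G {e | e ∈ p.edges} c d ∧
    ¬ AvoidsE G {e | e ∈ p.edges} a c ∧
    ¬ Avoids G {v1} a b ∧ ¬ Avoids G {v2} c d

variable {G : SimpleGraph V} {x y z u v w : V}

namespace Avoids

variable {S : Set V}

theorem symm (h : Avoids G S x y) : Avoids G S y x := by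
  obtain ⟨q, hq⟩ := h
  exact ⟨q.reverse, fun u hu => hq u (by simpa using hu)⟩

theorem trans (hxy : Avoids G S x y) (hyz : Avoids G S y z) : Avoids G S x z := by
  obtain ⟨q₁, h₁⟩ := hxy
  obtain ⟨q₂, h₂⟩ := hyz
  refine ⟨q₁.append q₂, fun u hu => ?_⟩
  rcases (Walk.mem_support_append_iff _ _).mp hu with hu | hu
  exacts [h₁ u hu, h₂ u hu]

end Avoids

namespace AvoidsE

variable {F : Set (Sym2 V)}

theorem symm (h : AvoidsE G F x y) : AvoidsE G F y x := by
  obtain ⟨q, hq⟩ := h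
  exact ⟨q.reverse, fun e he => hq e (by simpa using he)⟩

theorem trans (hxy : AvoidsE G F x y) (hyz : AvoidsE G F y z) : AvoidsE G F x z := by
  obtain ⟨q₁, h₁⟩ := hxy
  obtain ⟨q₂, h₂⟩ := hyz
  refine ⟨q₁.append q₂, fun e he => ?_⟩
  rcases List.mem_append.mp (Walk.edges_append q₁ q₂ ▸ he) with he | he
  exacts [h₁ e he, h₂ e he]

end AvoidsE

theorem SimpleGraph.Walk.avoids_of_notMem_support (q : G.Walk x y) (hu : u ∈ q.support)
    (hv : v ∉ q.support) : Avoids G {v} u y := by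
  classical
  exact ⟨q.dropUntil u hu, fun _ hz hzv => hv (hzv ▸ q.support_dropUntil_subset_support hu hz)⟩

theorem SimpleGraph.Walk.IsPath.avoids_end {q : G.Walk x y} (hq : q.IsPath)
    (hu : u ∈ q.support) (huy : u ≠ y) : Avoids G {y} x u := by
  classical
  exact ⟨q.takeUntil u hu,
    fun _ hz hzy => Walk.endpoint_notMem_support_takeUntil hq hu huy.symm (hzy ▸ hz)⟩

theorem SimpleGraph.Walk.IsPath.eq_of_mem_support_of_not_avoids {q : G.Walk x v}
    {p : G.Walk v w} (hq : q.IsPath) (hp : p.IsPath) (h : ¬ Avoids G {v} x w)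
    (hu : u ∈ q.support) (hu' : u ∈ p.support) : u = v := by
  by_contra huv
  exact h ((hq.avoids_end hu huv).trans (hp.reverse.avoids_end (by simpa using hu') huv).symm)

theorem SimpleGraph.Walk.IsPath.avoidsE_of_not_avoids {q : G.Walk x v} {p : G.Walk v w}
    (hq : q.IsPath) (hp : p.IsPath) (h : ¬ Avoids G {v} x w) :
    AvoidsE G {e | e ∈ p.edges} x v := by
  refine ⟨q, fun e he hep => ?_⟩
  induction e using Sym2.ind with
  | _ s t =>
    have hs := hq.eq_of_mem_support_of_not_avoids hp h (q.fst_mem_support_of_mem_edges he)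
      (p.fst_mem_support_of_mem_edges hep)
    have ht := hq.eq_of_mem_support_of_not_avoids hp h (q.snd_mem_support_of_mem_edges he)
      (p.snd_mem_support_of_mem_edges hep)
    exact (q.adj_of_mem_edges he).ne (hs.trans ht.symm)

theorem SimpleGraph.Walk.IsPath.support_disjoint_of_not_avoids (hvw : v ≠ w)
    {q : G.Walk x v} {q' : G.Walk y w} (hq : q.IsPath) (hq' : q'.IsPath)
    (h : ¬ Avoids G {v} x w) (h' : ¬ Avoids G {w} y v) : ∀ u ∈ q.support, u ∉ q'.support := by
  intro u hu hu'
  have hw : w ∉ q.support := fun hw => h (hq.avoids_end hw hvw.symm)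
  have huw : u ≠ w := by rintro rfl; exact hw hu
  exact h' ((hq'.avoids_end hu' huw).trans (q.avoids_of_notMem_support hu hw))

theorem SimpleGraph.IsAcyclic.not_avoidsE_edges (hG : G.IsAcyclic) {p : G.Walk v w}
    (hp : p.IsPath) (hvw : v ≠ w) : ¬ AvoidsE G {e | e ∈ p.edges} v w := by
  classical
  rintro ⟨q, hq⟩
  have hpq : p = q.bypass :=
    congrArg Subtype.val ((hG.subsingleton_path v w).elim ⟨p, hp⟩ ⟨q.bypass, q.bypass_isPath⟩)
  cases p with
  | nil => exact hvw rfl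
  | cons hadj p' =>
    have he : s(v, _) ∈ (Walk.cons hadj p').edges := List.mem_cons_self
    exact hq _ (q.edges_bypass_subset_edges (hpq ▸ he)) he

theorem stmt15_general {V : Type*} (G : SimpleGraph V)
    (hT : IsBinaryTree G) (v1 v2 : V) (hne : v1 ≠ v2)
    (a b c d : V)
    (hab : ¬ Avoids G {v1} a b)
    (hav : ¬ Avoids G {v1} a v2) (hbv : ¬ Avoids G {v1} b v2)
    (hcd : ¬ Avoids G {v2} c d)
    (hcv : ¬ Avoids G {v2} c v1) (hdv : ¬ Avoids G {v2} d v1) :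
    Displays G a b c d ∧ DistPath G a b c d v1 v2 := by
  have hconn := hT.1.connected.preconnected
  obtain ⟨p, hp⟩ := hconn.exists_isPath v1 v2
  obtain ⟨pa, hpa⟩ := hconn.exists_isPath a v1
  obtain ⟨pb, hpb⟩ := hconn.exists_isPath b v1
  obtain ⟨pc, hpc⟩ := hconn.exists_isPath c v2
  obtain ⟨pd, hpd⟩ := hconn.exists_isPath d v2
  have hrev : {e | e ∈ p.reverse.edges} = {e | e ∈ p.edges} := by ext; simp
  have hEa := hpa.avoidsE_of_not_avoids hp hav
  have hEb := hpb.avoidsE_of_not_avoids hp hbv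
  have hEc := hrev ▸ hpc.avoidsE_of_not_avoids hp.reverse hcv
  have hEd := hrev ▸ hpd.avoidsE_of_not_avoids hp.reverse hdv
  refine ⟨⟨pa.append pb.reverse, pc.append pd.reverse, fun u hu hu' => ?_⟩,
    p, hp, hEa.trans hEb.symm, hEc.trans hEd.symm,
    fun hac => hT.1.isAcyclic.not_avoidsE_edges hp hne (hEa.symm.trans (hac.trans hEc)),
    hab, hcd⟩
  simp only [Walk.mem_support_append_iff, Walk.support_reverse, List.mem_reverse] at hu hu'
  rcases hu with hu | hu <;> rcases hu' with hu' | hu'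
  · exact hpa.support_disjoint_of_not_avoids hne hpc hav hcv u hu hu'
  · exact hpa.support_disjoint_of_not_avoids hne hpd hav hdv u hu hu'
  · exact hpb.support_disjoint_of_not_avoids hne hpc hbv hcv u hu hu'
  · exact hpb.support_disjoint_of_not_avoids hne hpd hbv hdv u hu hu'

/-- Given a binary phylogenetic tree `T`, two distinct internal vertices `v1`
and `v2`, leaves `a, b` in distinct components of `T − v1` not containing `v2`,
and leaves `c, d` in distinct components of `T − v2` not containing `v1`, the
quartet `ab|cd` is displayed by `T` and distinguishes the path from `v1` to
`v2`. -/
theorem stmt15 {V : Type*} [Fintype V] (G : SimpleGraph V)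
    (hT : IsBinaryTree G) (v1 v2 : V) (hne : v1 ≠ v2)
    (h1 : IsDeg3 G v1) (h2 : IsDeg3 G v2)
    (a b c d : V)
    (ha : IsLeaf G a) (hb : IsLeaf G b) (hc : IsLeaf G c) (hd : IsLeaf G d)
    (hab : ¬ Avoids G {v1} a b)
    (hav : ¬ Avoids G {v1} a v2) (hbv : ¬ Avoids G {v1} b v2)
    (hcd : ¬ Avoids G {v2} c d)
    (hcv : ¬ Avoids G {v2} c v1) (hdv : ¬ Avoids G {v2} d v1) :
    Displays G a b c d ∧ DistPath G a b c d v1 v2 :=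
  stmt15_general G hT v1 v2 hne a b c d hab hav hbv hcd hcv hdv
end

section
/- For a binary phylogenetic tree T on n leaves and any spanning-tree-consistent choice of efficient quartets, every internal edge of T is distinguished by exactly one quartet of the linked subsystem L(T) ⊆ E(T), and distinct internal edges are distinguished by distinct quartets; hence the map from internal edges to L(T) is a bijection. -/
open SimpleGraph

variable {V : Type*}

variable {X : Type*}

/-- The labelled tree `(G, ℓ)` displays the quartet `q` on the taxa `X`. -/
def DisplaysQ (G : SimpleGraph V) (ℓ : X → V) (q : Sym2 (Sym2 X)) : Prop :=
  ∃ a b c d : X, a ≠ b ∧ a ≠ c ∧ a ≠ d ∧ b ≠ c ∧ b ≠ d ∧ c ≠ d ∧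
    q = s(s(a, b), s(c, d)) ∧ Displays G (ℓ a) (ℓ b) (ℓ c) (ℓ d)

/-- The quartet `q` distinguishes the path between `v1` and `v2` in the
labelled tree `(G, ℓ)`. -/
def QDist (G : SimpleGraph V) (ℓ : X → V) (q : Sym2 (Sym2 X)) (v1 v2 : V) : Prop :=
  ∃ a b c d : X, q = s(s(a, b), s(c, d)) ∧ DistPath G (ℓ a) (ℓ b) (ℓ c) (ℓ d) v1 v2

/-- The support (taxon set) of a quartet. -/
def suppQ (q : Sym2 (Sym2 X)) : Set X := {x | ∃ p ∈ q, x ∈ p}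

/-- Two quartets are linked (there is an edge between them in the graph
`G_T(L)`): they distinguish adjacent internal edges of the tree and the union
of their supports has cardinality 5. -/
def LinkedQ (G : SimpleGraph V) (ℓ : X → V) (q q' : Sym2 (Sym2 X)) : Prop :=
  ∃ u v w : V, u ≠ w ∧ G.Adj u v ∧ G.Adj v w ∧
    (QDist G ℓ q u v ∨ QDist G ℓ q v u) ∧
    (QDist G ℓ q' v w ∨ QDist G ℓ q' w v) ∧
    (suppQ q ∪ suppQ q').ncard = 5

lemma avoids_symm {G : SimpleGraph V} {S : Set V} {x y : V} (h : Avoids G S x y) :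
    Avoids G S y x := by
  obtain ⟨w, hw⟩ := h
  exact ⟨w.reverse, fun u hu => hw u
    (by rwa [SimpleGraph.Walk.support_reverse, List.mem_reverse] at hu)⟩

lemma not_avoids_symm {G : SimpleGraph V} {S : Set V} {x y : V} (h : ¬ Avoids G S x y) :
    ¬ Avoids G S y x := fun h' => h (avoids_symm h')

lemma not_avoids_congr {G : SimpleGraph V} {S : Set V} {a b a' b' : V}
    (he : s(a, b) = s(a', b')) (h : ¬ Avoids G S a' b') : ¬ Avoids G S a b := by
  rw [Sym2.eq_iff] at he
  rcases he with ⟨rfl, rfl⟩ | ⟨rfl, rfl⟩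
  · exact h
  · exact not_avoids_symm h

lemma helper16 {G : SimpleGraph V} {a b c d x y : V} {e : Sym2 V}
    (H1 : AvoidsE G {e} a b) (H2 : AvoidsE G {e} c d) (H3 : ¬ AvoidsE G {e} a c)
    (H4 : ¬ Avoids G {x} a b) (H5 : ¬ Avoids G {y} c d)
    (hxy : G.Adj x y) (hne : e ≠ s(x, y)) : False := by
  classical
  obtain ⟨w1, hw1⟩ := H1
  obtain ⟨w2, hw2⟩ := H2
  have hx : x ∈ w1.support := by
    by_contra hx
    exact H4 ⟨w1, fun u hu h => hx ((Set.mem_singleton_iff.mp h) ▸ hu)⟩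
  have hy : y ∈ w2.support := by
    by_contra hy
    exact H5 ⟨w2, fun u hu h => hy ((Set.mem_singleton_iff.mp h) ▸ hu)⟩
  apply H3
  refine ⟨(w1.takeUntil x hx).append ((SimpleGraph.Walk.cons hxy SimpleGraph.Walk.nil).append
    (w2.takeUntil y hy).reverse), ?_⟩
  intro f hf
  rw [Set.mem_singleton_iff]
  simp only [SimpleGraph.Walk.edges_append, SimpleGraph.Walk.edges_cons,
    SimpleGraph.Walk.edges_nil, SimpleGraph.Walk.edges_reverse, List.mem_append,
    List.mem_cons, List.mem_reverse, List.not_mem_nil, or_false] at hf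
  rcases hf with hf | hf | hf
  · exact fun h => hw1 f (SimpleGraph.Walk.edges_takeUntil_subset _ _ hf)
      (Set.mem_singleton_iff.mpr h)
  · exact fun h => hne (h ▸ hf)
  · exact fun h => hw2 f (SimpleGraph.Walk.edges_takeUntil_subset _ _ hf)
      (Set.mem_singleton_iff.mpr h)

lemma distPath_edge16 {G : SimpleGraph V} {a b c d u v : V} (hac : G.IsAcyclic)
    (hadj : G.Adj u v) (h : DistPath G a b c d u v) :
    AvoidsE G {s(u, v)} a b ∧ AvoidsE G {s(u, v)} c d ∧ ¬ AvoidsE G {s(u, v)} a c ∧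
      ¬ Avoids G {u} a b ∧ ¬ Avoids G {v} c d := by
  obtain ⟨p, hp, h1, h2, h3, h4, h5⟩ := h
  have hep : (SimpleGraph.Walk.cons hadj SimpleGraph.Walk.nil).IsPath := by
    simp [hadj.ne]
  have hpq := hac.path_unique ⟨p, hp⟩ ⟨SimpleGraph.Walk.cons hadj SimpleGraph.Walk.nil, hep⟩
  have hpe : p.edges = [s(u, v)] := by
    have hval : p = SimpleGraph.Walk.cons hadj SimpleGraph.Walk.nil := congrArg Subtype.val hpq
    rw [hval]; rfl
  have hset : {e | e ∈ p.edges} = ({s(u, v)} : Set (Sym2 V)) := by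
    rw [hpe]; ext f; simp
  rw [hset] at h1 h2 h3
  exact ⟨h1, h2, h3, h4, h5⟩

lemma edge_determined16 {G : SimpleGraph V} {a b c d a' b' c' d' u v u' v' : V}
    (hac : G.IsAcyclic) (hadj : G.Adj u v) (hadj' : G.Adj u' v')
    (hD : DistPath G a b c d u v) (hD' : DistPath G a' b' c' d' u' v')
    (heq : s(s(a, b), s(c, d)) = s(s(a', b'), s(c', d'))) :
    s(u, v) = s(u', v') := by
  obtain ⟨H1, H2, H3, H4, H5⟩ := distPath_edge16 hac hadj hD
  obtain ⟨K1, K2, K3, K4, K5⟩ := distPath_edge16 hac hadj' hD'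
  by_contra hne
  rw [Sym2.eq_iff] at heq
  rcases heq with ⟨hab, hcd⟩ | ⟨hab, hcd⟩
  · exact helper16 H1 H2 H3 (not_avoids_congr hab K4) (not_avoids_congr hcd K5) hadj' hne
  · exact helper16 H1 H2 H3 (not_avoids_congr hab K5) (not_avoids_congr hcd K4) hadj'.symm
      (fun h => hne (h.trans Sym2.eq_swap))

/-- Every internal edge of `T` is distinguished by exactly one quartet of the
linked subsystem `L(T) ⊆ E(T)`, and distinct internal edges are distinguished
by distinct quartets; hence the map from internal edges to `L(T)` is a
bijection. -/
theorem stmt16 {V : Type*} [Fintype V] (G : SimpleGraph V) (n : ℕ) (hn : 4 ≤ n)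
    (hT : IsBinaryTree G) (hleaves : {v | IsLeaf G v}.ncard = n)
    (efq : V → V → Sym2 (Sym2 V))
    (hsym : ∀ i j, efq i j = efq j i)
    (hq : ∀ i j, IsDeg3 G i → IsDeg3 G j → i ≠ j →
      ∃ a b c d, IsLeaf G a ∧ IsLeaf G b ∧ IsLeaf G c ∧ IsLeaf G d ∧
        efq i j = s(s(a, b), s(c, d)) ∧ DistPath G a b c d i j) :
    (∀ u v, G.Adj u v → IsDeg3 G u → IsDeg3 G v →
      ∃! q, q ∈ {q | ∃ i j, IsDeg3 G i ∧ IsDeg3 G j ∧ G.Adj i j ∧ q = efq i j} ∧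
        (QDist G id q u v ∨ QDist G id q v u)) ∧
    (∀ u v u' v', G.Adj u v → IsDeg3 G u → IsDeg3 G v →
      G.Adj u' v' → IsDeg3 G u' → IsDeg3 G v' →
      ∀ q ∈ {q | ∃ i j, IsDeg3 G i ∧ IsDeg3 G j ∧ G.Adj i j ∧ q = efq i j},
        (QDist G id q u v ∨ QDist G id q v u) →
        (QDist G id q u' v' ∨ QDist G id q v' u') →
        s(u, v) = s(u', v')) ∧
    ∃ F : Sym2 V → Sym2 (Sym2 V),
      Set.BijOn F {e | ∃ u v, e = s(u, v) ∧ G.Adj u v ∧ IsDeg3 G u ∧ IsDeg3 G v}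
        {q | ∃ i j, IsDeg3 G i ∧ IsDeg3 G j ∧ G.Adj i j ∧ q = efq i j} ∧
      ∀ u v, G.Adj u v → IsDeg3 G u → IsDeg3 G v →
        (QDist G id (F s(u, v)) u v ∨ QDist G id (F s(u, v)) v u) := by
  have hac : G.IsAcyclic := hT.1.2
  have key : ∀ u v u' v' (q : Sym2 (Sym2 V)), G.Adj u v → G.Adj u' v' →
      QDist G id q u v → QDist G id q u' v' → s(u, v) = s(u', v') := by
    rintro u v u' v' q huv hu'v' ⟨a, b, c, d, rfl, hD⟩ ⟨a', b', c', d', heq, hD'⟩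
    exact edge_determined16 hac huv hu'v' hD hD' heq
  have key2 : ∀ u v u' v' (q : Sym2 (Sym2 V)), G.Adj u v → G.Adj u' v' →
      (QDist G id q u v ∨ QDist G id q v u) →
      (QDist G id q u' v' ∨ QDist G id q v' u') → s(u, v) = s(u', v') := by
    intro u v u' v' q huv hu'v' h1 h2
    rcases h1 with h1 | h1 <;> rcases h2 with h2 | h2
    · exact key _ _ _ _ _ huv hu'v' h1 h2
    · exact (key _ _ _ _ _ huv hu'v'.symm h1 h2).trans Sym2.eq_swap
    · exact Sym2.eq_swap.symm.trans (key _ _ _ _ _ huv.symm hu'v' h1 h2)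
    · exact Sym2.eq_swap.symm.trans
        ((key _ _ _ _ _ huv.symm hu'v'.symm h1 h2).trans Sym2.eq_swap)
  refine ⟨?_, ?_, ?_⟩
  · intro u v huv hu hv
    obtain ⟨a, b, c, d, _, _, _, _, hqe, hD⟩ := hq u v hu hv huv.ne
    refine ⟨efq u v, ⟨⟨u, v, hu, hv, huv, rfl⟩, Or.inl ⟨a, b, c, d, hqe, hD⟩⟩, ?_⟩
    rintro q' ⟨⟨i, j, h3i, h3j, hij, rfl⟩, hdist⟩
    obtain ⟨a', b', c', d', _, _, _, _, hqe', hD'⟩ := hq i j h3i h3j hij.ne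
    have hedge : s(i, j) = s(u, v) :=
      key2 i j u v _ hij huv (Or.inl ⟨a', b', c', d', hqe', hD'⟩) hdist
    rw [Sym2.eq_iff] at hedge
    rcases hedge with ⟨rfl, rfl⟩ | ⟨rfl, rfl⟩
    · rfl
    · exact hsym _ _
  · intro u v u' v' huv _ _ hu'v' _ _ q _ h1 h2
    exact key2 u v u' v' q huv hu'v' h1 h2
  · refine ⟨Sym2.lift ⟨efq, hsym⟩, ⟨?_, ?_, ?_⟩, ?_⟩
    · rintro e ⟨u, v, rfl, huv, hu, hv⟩
      exact ⟨u, v, hu, hv, huv, Sym2.lift_mk _ _ _⟩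
    · rintro e1 ⟨u, v, rfl, huv, hu, hv⟩ e2 ⟨u', v', rfl, hu'v', hu', hv'⟩ hFe
      rw [Sym2.lift_mk, Sym2.lift_mk] at hFe
      obtain ⟨a, b, c, d, _, _, _, _, hqe, hD⟩ := hq u v hu hv huv.ne
      obtain ⟨a', b', c', d', _, _, _, _, hqe', hD'⟩ := hq u' v' hu' hv' hu'v'.ne
      exact edge_determined16 hac huv hu'v' hD hD'
        (hqe.symm.trans ((hFe : efq u v = efq u' v').trans hqe'))
    · rintro q ⟨i, j, h3i, h3j, hij, rfl⟩
      exact ⟨s(i, j), ⟨i, j, rfl, hij, h3i, h3j⟩, Sym2.lift_mk _ _ _⟩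
    · intro u v huv hu hv
      obtain ⟨a, b, c, d, _, _, _, _, hqe, hD⟩ := hq u v hu hv huv.ne
      rw [Sym2.lift_mk]
      exact Or.inl ⟨a, b, c, d, hqe, hD⟩
end
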